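/- arXiv:2210.16880 — 2 statements merged into one kernel-verified Lean document; each statement's English description precedes it below -/
import Mathlib

section
/- Let p ∈ (0,1) and let F, G ∈ F_1^+ be cumulative distribution functions. If F is continuous at the point x_p := F^{-1}(p), then the gap functional Γ_p(F,G) = ∫_p^1 (F^{-1}(u) − G^{-1}(u)) du − ∫_{F^{-1}(p)}^∞ (G(x) − F(x)) dx satisfies 0 ≤ Γ_p(F,G) ≤ (F^{-1}(p) − G^{-1}(p)) (G(x_p) − F(x_p)). -/
open MeasureTheory ProbabilityTheory Filter Set
open scoped Topology

/-- The cumulative distribution function of a probability measure `μ` on `ℝ`. -/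
noncomputable def cdfOf (μ : Measure ℝ) : ℝ → ℝ := fun x => (μ (Iic x)).toReal

/-- The quantile function of a cdf `F`: `F⁻¹(p) = inf {x : F x ≥ p}`. -/
noncomputable def qtl (F : ℝ → ℝ) (p : ℝ) : ℝ := sInf {x | p ≤ F x}

/-- The "gap" functional
`Γ_p(F,G) = ∫_p^1 (F⁻¹(u) − G⁻¹(u)) du − ∫_{F⁻¹(p)}^∞ (G(x) − F(x)) dx`. -/
noncomputable def gapFun (p : ℝ) (F G : ℝ → ℝ) : ℝ :=
  (∫ u in p..1, (qtl F u - qtl G u)) - ∫ x in Ioi (qtl F p), (G x - F x)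

section Quantile

variable (μ : Measure ℝ) [IsProbabilityMeasure μ]

lemma cdfOf_eq : cdfOf μ = ⇑(cdf μ) := by
  funext x; rw [cdfOf, cdf_eq_real, measureReal_def]

lemma qtl_set_nonempty {u : ℝ} (hu : u < 1) : {x | u ≤ cdf μ x}.Nonempty := by
  have h := tendsto_cdf_atTop μ
  have : ∀ᶠ x in atTop, u ≤ cdf μ x := h.eventually (eventually_ge_nhds hu)
  obtain ⟨x, hx⟩ := this.exists
  exact ⟨x, hx⟩

lemma qtl_set_bddBelow {u : ℝ} (hu : 0 < u) : BddBelow {x | u ≤ cdf μ x} := by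
  have h := tendsto_cdf_atBot μ
  have : ∀ᶠ x in atBot, cdf μ x < u := h.eventually (eventually_lt_nhds hu)
  obtain ⟨x₀, hx₀⟩ := this.exists
  refine ⟨x₀, fun x hx => ?_⟩
  by_contra hlt
  push_neg at hlt
  exact absurd (le_trans hx ((monotone_cdf μ) hlt.le)) (not_le.mpr hx₀)

lemma cdf_qtl_ge {u : ℝ} (hu : u ∈ Ioo (0:ℝ) 1) : u ≤ cdf μ (qtl (cdfOf μ) u) := by
  rw [cdfOf_eq, qtl]
  show u ≤ cdf μ (sInf {x | u ≤ cdf μ x})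
  set S := {x | u ≤ cdf μ x} with hS
  have hne : S.Nonempty := qtl_set_nonempty μ hu.2
  have hbd : BddBelow S := qtl_set_bddBelow μ hu.1
  set q := sInf S with hq
  by_contra hlt'
  push_neg at hlt'
  have hlt : cdf μ q < u := hlt'
  have hrc : ContinuousWithinAt (cdf μ) (Ici q) q := (cdf μ).right_continuous q
  have hev : ∀ᶠ x in 𝓝[Ici q] q, cdf μ x < u := hrc.tendsto.eventually (eventually_lt_nhds hlt)
  rw [eventually_nhdsWithin_iff] at hev
  obtain ⟨ε, hε, hball⟩ := Metric.eventually_nhds_iff.mp hev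
  have hub : q + ε/2 ≤ q := by
    apply le_csInf hne
    intro x hx
    by_contra hxlt
    push_neg at hxlt
    have hqx : q ≤ x := csInf_le hbd hx
    have : cdf μ x < u := by
      apply hball
      · rw [Real.dist_eq, abs_of_nonneg (by linarith)]; linarith
      · exact hqx
    exact absurd hx (not_le.mpr this)
  linarith

lemma qtl_le_iff {u : ℝ} (hu : u ∈ Ioo (0:ℝ) 1) {x : ℝ} :
    qtl (cdfOf μ) u ≤ x ↔ u ≤ cdf μ x := by
  constructor
  · intro h
    exact le_trans (cdf_qtl_ge μ hu) ((monotone_cdf μ) h)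
  · intro h
    rw [qtl, cdfOf_eq]
    exact csInf_le (qtl_set_bddBelow μ hu.1) h

lemma lt_qtl_iff {u : ℝ} (hu : u ∈ Ioo (0:ℝ) 1) {x : ℝ} :
    x < qtl (cdfOf μ) u ↔ cdf μ x < u := by
  rw [← not_le, ← not_le, qtl_le_iff μ hu]

lemma qtl_mono {u v : ℝ} (hu : u ∈ Ioo (0:ℝ) 1) (hv : v ∈ Ioo (0:ℝ) 1) (huv : u ≤ v) :
    qtl (cdfOf μ) u ≤ qtl (cdfOf μ) v := by
  rw [qtl_le_iff μ hu]
  exact le_trans huv (cdf_qtl_ge μ hv)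

lemma cdf_qtl_eq {p : ℝ} (hp : p ∈ Ioo (0:ℝ) 1)
    (hcont : ContinuousAt (cdfOf μ) (qtl (cdfOf μ) p)) :
    cdf μ (qtl (cdfOf μ) p) = p := by
  set a := qtl (cdfOf μ) p
  refine le_antisymm ?_ (cdf_qtl_ge μ hp)
  rw [cdfOf_eq] at hcont
  have hlt : ∀ x < a, cdf μ x < p := fun x hx => (lt_qtl_iff μ hp).mp hx
  have h1 : Tendsto (cdf μ) (𝓝[<] a) (𝓝 (cdf μ a)) :=
    hcont.continuousWithinAt.tendsto
  refine le_of_tendsto h1 ?_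
  filter_upwards [self_mem_nhdsWithin] with x hx
  exact (hlt x hx).le

end Quantile

section Tonelli

lemma swap_tool (κ η : Measure ℝ) [SFinite κ] [SFinite η] {s : Set (ℝ × ℝ)}
    (hs : MeasurableSet s) :
    ∫⁻ x, η {y | (x, y) ∈ s} ∂κ = ∫⁻ y, κ {x | (x, y) ∈ s} ∂η := by
  have h1 : ∀ x, η {y | (x, y) ∈ s} = ∫⁻ y, s.indicator 1 (x, y) ∂η := by
    intro x
    calc η {y | (x, y) ∈ s} = ∫⁻ y, (Prod.mk x ⁻¹' s).indicator 1 y ∂η :=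
          (lintegral_indicator_one (measurable_prodMk_left hs)).symm
      _ = ∫⁻ y, s.indicator 1 (x, y) ∂η := by
          refine lintegral_congr fun y => ?_
          simp only [indicator, mem_preimage]; rfl
  have h2 : ∀ y, κ {x | (x, y) ∈ s} = ∫⁻ x, s.indicator 1 (x, y) ∂κ := by
    intro y
    calc κ {x | (x, y) ∈ s} = ∫⁻ x, ((fun x => (x, y)) ⁻¹' s).indicator 1 x ∂κ :=
          (lintegral_indicator_one (measurable_prodMk_right hs)).symm
      _ = ∫⁻ x, s.indicator 1 (x, y) ∂κ := by
          refine lintegral_congr fun x => ?_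
          simp only [indicator, mem_preimage]; rfl
  simp_rw [h1, h2]
  exact lintegral_lintegral_swap ((measurable_const.indicator hs).aemeasurable)

variable (μ : Measure ℝ) [IsProbabilityMeasure μ]

lemma ofReal_one_sub_cdf (x : ℝ) : ENNReal.ofReal (1 - cdf μ x) = μ (Ioi x) := by
  have h1 : μ (Ioi x) = 1 - μ (Iic x) := by
    rw [← prob_compl_eq_one_sub measurableSet_Iic, compl_Iic]
  rw [h1, ← ofReal_cdf μ x, ← ENNReal.ofReal_one,
    ← ENNReal.ofReal_sub _ (cdf_nonneg μ x)]

lemma T1 (a : ℝ) :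
    ∫⁻ x in Ioi a, ENNReal.ofReal (1 - cdf μ x) = ∫⁻ y, ENNReal.ofReal (y - a) ∂μ := by
  have hs : MeasurableSet {p : ℝ × ℝ | p.1 < p.2} := measurableSet_lt measurable_fst measurable_snd
  have := swap_tool (volume.restrict (Ioi a)) μ hs
  simp only [mem_setOf_eq] at this
  calc ∫⁻ x in Ioi a, ENNReal.ofReal (1 - cdf μ x)
      = ∫⁻ x in Ioi a, μ {y | x < y} := by
        refine lintegral_congr fun x => ?_
        rw [ofReal_one_sub_cdf]; rfl
    _ = ∫⁻ y, (volume.restrict (Ioi a)) {x | x < y} ∂μ := this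
    _ = ∫⁻ y, ENNReal.ofReal (y - a) ∂μ := by
        refine lintegral_congr fun y => ?_
        have : {x | x < y} = Iio y := rfl
        rw [this, Measure.restrict_apply measurableSet_Iio]
        have : Iio y ∩ Ioi a = Ioo a y := by ext z; simp [mem_Ioo, and_comm]
        rw [this, Real.volume_Ioo]

lemma T1_finite (hμ : Integrable (fun x => max x 0) μ) (a : ℝ) :
    ∫⁻ x in Ioi a, ENNReal.ofReal (1 - cdf μ x) < ⊤ := by
  rw [T1 μ a]
  have hb : ∀ y : ℝ, ENNReal.ofReal (y - a) ≤ ENNReal.ofReal (max y 0 + |a|) := by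
    intro y
    apply ENNReal.ofReal_le_ofReal
    rcases le_or_gt y 0 with h | h
    · have : y - a ≤ |a| := by
        rcases abs_cases a with ⟨h1, _⟩ | ⟨h1, _⟩ <;> linarith
      linarith [le_max_right y 0]
    · have : max y 0 = y := max_eq_left h.le
      rw [this]
      rcases abs_cases a with ⟨h1, _⟩ | ⟨h1, _⟩ <;> linarith
  calc ∫⁻ y, ENNReal.ofReal (y - a) ∂μ
      ≤ ∫⁻ y, ENNReal.ofReal (max y 0 + |a|) ∂μ := lintegral_mono hb
    _ < ⊤ := by
        have hint : Integrable (fun y => max y 0 + |a|) μ :=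
          hμ.add (integrable_const _)
        have h0 : 0 ≤ᵐ[μ] (fun y => max y 0 + |a|) := by
          filter_upwards with y
          positivity
        exact lt_top_iff_ne_top.mpr
          ((lintegral_ofReal_ne_top_iff_integrable hint.aestronglyMeasurable h0).mpr hint)

lemma T2 (a : ℝ) :
    ∫⁻ u in Ioo (0:ℝ) 1, ENNReal.ofReal (qtl (cdfOf μ) u - a) =
    ∫⁻ x in Ioi a, ENNReal.ofReal (1 - cdf μ x) := by
  have hG : Measurable (cdf μ) := (monotone_cdf μ).measurable
  have hs : MeasurableSet {p : ℝ × ℝ | cdf μ p.2 < p.1} :=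
    measurableSet_lt (hG.comp measurable_snd) measurable_fst
  have hswap := swap_tool (volume.restrict (Ioo (0:ℝ) 1)) (volume.restrict (Ioi a)) hs
  simp only [mem_setOf_eq] at hswap
  calc ∫⁻ u in Ioo (0:ℝ) 1, ENNReal.ofReal (qtl (cdfOf μ) u - a)
      = ∫⁻ u in Ioo (0:ℝ) 1, (volume.restrict (Ioi a)) {x | cdf μ x < u} := by
        refine setLIntegral_congr_fun measurableSet_Ioo ?_
        intro u hu
        dsimp only
        have hset : {x | cdf μ x < u} = Iio (qtl (cdfOf μ) u) := by
          ext x; exact (lt_qtl_iff μ hu).symm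
        rw [hset, Measure.restrict_apply measurableSet_Iio]
        have : Iio (qtl (cdfOf μ) u) ∩ Ioi a = Ioo a (qtl (cdfOf μ) u) := by
          ext z; simp [mem_Ioo, and_comm]
        rw [this, Real.volume_Ioo]
    _ = ∫⁻ x in Ioi a, (volume.restrict (Ioo (0:ℝ) 1)) {u | cdf μ x < u} := hswap
    _ = ∫⁻ x in Ioi a, ENNReal.ofReal (1 - cdf μ x) := by
        refine lintegral_congr fun x => ?_
        have h0 : (0:ℝ) ≤ cdf μ x := cdf_nonneg μ x
        have hset : {u : ℝ | cdf μ x < u} = Ioi (cdf μ x) := rfl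
        rw [hset, Measure.restrict_apply measurableSet_Ioi]
        have : Ioi (cdf μ x) ∩ Ioo 0 1 = Ioo (cdf μ x) 1 := by
          ext u
          simp only [mem_inter_iff, mem_Ioi, mem_Ioo]
          constructor
          · rintro ⟨h1, _, h3⟩; exact ⟨h1, h3⟩
          · rintro ⟨h1, h2⟩; exact ⟨h1, lt_of_le_of_lt h0 h1, h2⟩
        rw [this, Real.volume_Ioo]

section Real

variable (μ : Measure ℝ) [IsProbabilityMeasure μ]

lemma ofReal_max_zero (x : ℝ) : ENNReal.ofReal (max x 0) = ENNReal.ofReal x := by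
  rcases le_total x 0 with h | h
  · rw [max_eq_right h, ENNReal.ofReal_zero, eq_comm, ENNReal.ofReal_eq_zero]; exact h
  · rw [max_eq_left h]

lemma qtl_aemeas {p : ℝ} (hp : p ∈ Ioo (0:ℝ) 1) {c d : ℝ} (h : Ioo c d ⊆ Ioo (0:ℝ) 1) :
    AEMeasurable (qtl (cdfOf μ)) (volume.restrict (Ioo c d)) := by
  have h0 : AEMeasurable (qtl (cdfOf μ)) (volume.restrict (Ioo (0:ℝ) 1)) :=
    aemeasurable_restrict_of_monotoneOn measurableSet_Ioo
      (fun u hu v hv huv => qtl_mono μ hu hv huv)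
  exact h0.mono_measure (Measure.restrict_mono h le_rfl)

lemma lint_qtl_finite (hμ : Integrable (fun x => max x 0) μ) (a : ℝ) :
    ∫⁻ u in Ioo (0:ℝ) 1, ENNReal.ofReal (qtl (cdfOf μ) u - a) < ⊤ := by
  rw [T2 μ a]; exact T1_finite μ hμ a

lemma intOn_1sub_cdf (hμ : Integrable (fun x => max x 0) μ) (a : ℝ) :
    IntegrableOn (fun x => 1 - cdf μ x) (Ioi a) := by
  constructor
  · exact (measurable_const.sub (monotone_cdf μ).measurable).aestronglyMeasurable
  · rw [hasFiniteIntegral_iff_ofReal]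
    · exact T1_finite μ hμ a
    · filter_upwards with x
      simp [cdf_le_one μ x]

lemma intOn_max_qtl (hμ : Integrable (fun x => max x 0) μ) {p : ℝ} (hp : p ∈ Ioo (0:ℝ) 1)
    (a : ℝ) {c d : ℝ} (h : Ioo c d ⊆ Ioo (0:ℝ) 1) :
    IntegrableOn (fun u => max (qtl (cdfOf μ) u - a) 0) (Ioo c d) := by
  constructor
  · exact (((qtl_aemeas μ hp h).sub aemeasurable_const).max
      aemeasurable_const).aestronglyMeasurable
  · rw [hasFiniteIntegral_iff_ofReal]
    · calc ∫⁻ u in Ioo c d, ENNReal.ofReal (max (qtl (cdfOf μ) u - a) 0)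
          = ∫⁻ u in Ioo c d, ENNReal.ofReal (qtl (cdfOf μ) u - a) := by
            refine lintegral_congr fun u => ofReal_max_zero _
        _ ≤ ∫⁻ u in Ioo (0:ℝ) 1, ENNReal.ofReal (qtl (cdfOf μ) u - a) :=
            lintegral_mono' (Measure.restrict_mono h le_rfl) le_rfl
        _ < ⊤ := lint_qtl_finite μ hμ a
    · filter_upwards with u
      exact le_max_right _ _

lemma lint_split {p : ℝ} (hp : p ∈ Ioo (0:ℝ) 1) (f : ℝ → ENNReal) :
    ∫⁻ u in Ioo (0:ℝ) 1, f u =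
      (∫⁻ u in Ioo (0:ℝ) p, f u) + ∫⁻ u in Ioo p 1, f u := by
  have hdisj : Disjoint (Ioo (0:ℝ) p) (Ico p 1) :=
    Set.disjoint_left.mpr (fun u hu hu' => absurd hu.2 (not_lt.mpr hu'.1))
  rw [← Ioo_union_Ico_eq_Ioo hp.1 hp.2.le, lintegral_union measurableSet_Ico hdisj,
    setLIntegral_congr (Ioo_ae_eq_Ico (a := p) (b := (1:ℝ))).symm]

/-- Main real-valued identity: `∫_{Ioi a} (1 - F) = ∫_{(0,p)} (F⁻¹(u)-a)⁺ + ∫_{(p,1)} (F⁻¹(u)-a)⁺`. -/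
lemma R2 (hμ : Integrable (fun x => max x 0) μ) {p : ℝ} (hp : p ∈ Ioo (0:ℝ) 1) (a : ℝ) :
    (∫ x in Ioi a, (1 - cdf μ x)) =
      (∫ u in Ioo (0:ℝ) p, max (qtl (cdfOf μ) u - a) 0) +
      (∫ u in Ioo p 1, max (qtl (cdfOf μ) u - a) 0) := by
  have h1 : Ioo (0:ℝ) p ⊆ Ioo (0:ℝ) 1 := Ioo_subset_Ioo le_rfl hp.2.le
  have h2 : Ioo p 1 ⊆ Ioo (0:ℝ) 1 := Ioo_subset_Ioo hp.1.le le_rfl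
  have key : ∀ {c d : ℝ}, Ioo c d ⊆ Ioo (0:ℝ) 1 →
      (∫ u in Ioo c d, max (qtl (cdfOf μ) u - a) 0) =
        (∫⁻ u in Ioo c d, ENNReal.ofReal (qtl (cdfOf μ) u - a)).toReal := by
    intro c d h
    rw [integral_eq_lintegral_of_nonneg_ae]
    · congr 1
      refine lintegral_congr fun u => ?_
      exact ofReal_max_zero _
    · filter_upwards with u; exact le_max_right _ _
    · exact (((qtl_aemeas μ hp h).sub aemeasurable_const).max
        aemeasurable_const).aestronglyMeasurable
  have hL : (∫ x in Ioi a, (1 - cdf μ x)) =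
      (∫⁻ x in Ioi a, ENNReal.ofReal (1 - cdf μ x)).toReal := by
    rw [integral_eq_lintegral_of_nonneg_ae]
    · filter_upwards with x; simp [cdf_le_one μ x]
    · exact (measurable_const.sub (monotone_cdf μ).measurable).aestronglyMeasurable
  rw [hL, key h1, key h2, ← ENNReal.toReal_add, ← lint_split hp, T2 μ a]
  · exact ((lintegral_mono' (Measure.restrict_mono h1 le_rfl) le_rfl).trans_lt
      (lint_qtl_finite μ hμ a)).ne
  · exact ((lintegral_mono' (Measure.restrict_mono h2 le_rfl) le_rfl).trans_lt
      (lint_qtl_finite μ hμ a)).ne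

lemma R1 (hμ : Integrable (fun x => max x 0) μ) {p : ℝ} (hp : p ∈ Ioo (0:ℝ) 1) :
    (∫ u in Ioo p 1, (qtl (cdfOf μ) u - qtl (cdfOf μ) p)) =
      ∫ x in Ioi (qtl (cdfOf μ) p), (1 - cdf μ x) := by
  set a := qtl (cdfOf μ) p
  have e1 : (∫ u in Ioo p 1, (qtl (cdfOf μ) u - a)) =
      ∫ u in Ioo p 1, max (qtl (cdfOf μ) u - a) 0 := by
    refine setIntegral_congr_fun measurableSet_Ioo fun u hu => ?_
    have : a ≤ qtl (cdfOf μ) u :=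
      qtl_mono μ hp ⟨lt_trans hp.1 hu.1, hu.2⟩ hu.1.le
    rw [max_eq_left (sub_nonneg.mpr this)]
  have e2 : (∫ u in Ioo (0:ℝ) p, max (qtl (cdfOf μ) u - a) 0) = 0 := by
    have : ∀ u ∈ Ioo (0:ℝ) p, max (qtl (cdfOf μ) u - a) 0 = (0:ℝ) := by
      intro u hu
      have : qtl (cdfOf μ) u ≤ a :=
        qtl_mono μ ⟨hu.1, lt_trans hu.2 hp.2⟩ hp hu.2.le
      rw [max_eq_right (sub_nonpos.mpr this)]
    rw [setIntegral_congr_fun measurableSet_Ioo this, integral_zero]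
  rw [e1, R2 μ hμ hp a, e2, zero_add]

lemma intOn_negpart {p : ℝ} (hp : p ∈ Ioo (0:ℝ) 1) (a : ℝ) :
    IntegrableOn (fun u => max (a - qtl (cdfOf μ) u) 0) (Ioo p 1) := by
  have hvol : volume (Ioo p 1) < ⊤ := by
    rw [Real.volume_Ioo]; exact ENNReal.ofReal_lt_top
  refine Integrable.mono'
    (g := fun _ => max (a - qtl (cdfOf μ) p) 0)
    (integrableOn_const hvol.ne) ?_ ?_
  · exact ((aemeasurable_const.sub
      (qtl_aemeas μ hp (Ioo_subset_Ioo hp.1.le le_rfl))).max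
      aemeasurable_const).aestronglyMeasurable
  · refine ae_restrict_of_forall_mem measurableSet_Ioo fun u hu => ?_
    rw [Real.norm_eq_abs, abs_of_nonneg (le_max_right _ _)]
    have : qtl (cdfOf μ) p ≤ qtl (cdfOf μ) u :=
      qtl_mono μ hp ⟨lt_trans hp.1 hu.1, hu.2⟩ hu.1.le
    exact max_le_max (by linarith) le_rfl

end Real

section Main

lemma integral_indicator_le (s : Set ℝ) (e f C : ℝ) (hC : 0 ≤ C) (hef : e ≤ f) :
    (∫ u in s, (Ioc e f).indicator (fun _ => C) u) ≤ C * (f - e) := by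
  rw [setIntegral_indicator measurableSet_Ioc, setIntegral_const, smul_eq_mul, measureReal_def]
  have h1 : volume (s ∩ Ioc e f) ≤ ENNReal.ofReal (f - e) := by
    calc volume (s ∩ Ioc e f) ≤ volume (Ioc e f) := measure_mono inter_subset_right
      _ = ENNReal.ofReal (f - e) := Real.volume_Ioc
  have h2 : (volume (s ∩ Ioc e f)).toReal ≤ f - e := by
    have := ENNReal.toReal_mono ENNReal.ofReal_ne_top h1
    rwa [ENNReal.toReal_ofReal (by linarith)] at this
  have h3 : 0 ≤ (volume (s ∩ Ioc e f)).toReal := ENNReal.toReal_nonneg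
  nlinarith

lemma intOn_indicator {c d : ℝ} (e f C : ℝ) :
    IntegrableOn ((Ioc e f).indicator (fun _ => C)) (Ioo c d) := by
  have hvol : volume (Ioo c d) < ⊤ := by
    rw [Real.volume_Ioo]; exact ENNReal.ofReal_lt_top
  exact (integrableOn_const hvol.ne).indicator measurableSet_Ioc

theorem stmt3 (μ ν : Measure ℝ) [IsProbabilityMeasure μ] [IsProbabilityMeasure ν]
    (hμ : Integrable (fun x => max x 0) μ) (hν : Integrable (fun x => max x 0) ν)
    (p : ℝ) (hp : p ∈ Ioo (0 : ℝ) 1)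
    (hcont : ContinuousAt (cdfOf μ) (qtl (cdfOf μ) p)) :
    0 ≤ gapFun p (cdfOf μ) (cdfOf ν) ∧
      gapFun p (cdfOf μ) (cdfOf ν) ≤
        (qtl (cdfOf μ) p - qtl (cdfOf ν) p) *
          (cdfOf ν (qtl (cdfOf μ) p) - cdfOf μ (qtl (cdfOf μ) p)) := by
  have h1 : Ioo (0:ℝ) p ⊆ Ioo (0:ℝ) 1 := Ioo_subset_Ioo le_rfl hp.2.le
  have h2 : Ioo p 1 ⊆ Ioo (0:ℝ) 1 := Ioo_subset_Ioo hp.1.le le_rfl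
  set a := qtl (cdfOf μ) p with ha
  set q := qtl (cdfOf ν) p with hq
  set g := qtl (cdfOf ν) with hg
  set I₁ := ∫ u in Ioo (0:ℝ) p, max (g u - a) 0 with hI₁
  set I₂ := ∫ u in Ioo p 1, max (a - g u) 0 with hI₂
  set M := ∫ u in Ioo p 1, max (g u - a) 0 with hM
  set A := ∫ x in Ioi a, (1 - cdf μ x) with hA
  set B := ∫ x in Ioi a, (1 - cdf ν x) with hB
  -- pointwise decomposition
  have hpt : ∀ x : ℝ, x = max x 0 - max (-x) 0 := by
    intro x
    rcases le_total x 0 with h | h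
    · rw [max_eq_right h, max_eq_left (by linarith)]; ring
    · rw [max_eq_left h, max_eq_right (by linarith)]; ring
  -- integrability on Ioo p 1
  have hint_f : IntegrableOn (fun u => qtl (cdfOf μ) u - a) (Ioo p 1) := by
    refine (intOn_max_qtl μ hμ hp a h2).congr ?_
    refine ae_restrict_of_forall_mem measurableSet_Ioo fun u hu => ?_
    have : a ≤ qtl (cdfOf μ) u := qtl_mono μ hp ⟨lt_trans hp.1 hu.1, hu.2⟩ hu.1.le
    simp only [max_eq_left (sub_nonneg.mpr this)]
  have hint_g : IntegrableOn (fun u => g u - a) (Ioo p 1) := by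
    refine ((intOn_max_qtl ν hν hp a h2).sub (intOn_negpart ν hp a)).congr ?_
    refine Eventually.of_forall fun u => ?_
    have := hpt (g u - a)
    simp only [neg_sub] at this
    exact this.symm
  -- step 4
  have step4 : (∫ u in Ioo p 1, (g u - a)) = M - I₂ := by
    have e : (∫ u in Ioo p 1, (g u - a)) =
        ∫ u in Ioo p 1, (max (g u - a) 0 - max (a - g u) 0) := by
      refine setIntegral_congr_fun measurableSet_Ioo fun u _ => ?_
      have := hpt (g u - a)
      simp only [neg_sub] at this
      exact this
    rw [e, integral_sub (intOn_max_qtl ν hν hp a h2) (intOn_negpart ν hp a)]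
  -- decomposition of the gap
  have hgap : gapFun p (cdfOf μ) (cdfOf ν) = I₁ + I₂ := by
    have e1 : (∫ u in p..1, (qtl (cdfOf μ) u - g u)) =
        ∫ u in Ioo p 1, (qtl (cdfOf μ) u - g u) := by
      rw [intervalIntegral.integral_of_le hp.2.le, integral_Ioc_eq_integral_Ioo]
    have e2 : (∫ u in Ioo p 1, (qtl (cdfOf μ) u - g u)) =
        (∫ u in Ioo p 1, (qtl (cdfOf μ) u - a)) - ∫ u in Ioo p 1, (g u - a) := by
      rw [← integral_sub hint_f hint_g]
      refine setIntegral_congr_fun measurableSet_Ioo fun u _ => ?_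
      ring
    have e3 : (∫ u in Ioo p 1, (qtl (cdfOf μ) u - a)) = A := R1 μ hμ hp
    have e5 : B = I₁ + M := R2 ν hν hp a
    have e6 : (∫ x in Ioi a, (cdfOf ν x - cdfOf μ x)) = A - B := by
      rw [← integral_sub (intOn_1sub_cdf μ hμ a) (intOn_1sub_cdf ν hν a)]
      refine setIntegral_congr_fun measurableSet_Ioi fun x _ => ?_
      rw [cdfOf_eq μ, cdfOf_eq ν]
      ring
    rw [gapFun, ← hg, ← ha, e1, e2, e3, step4, e6, e5]
    ring
  have hI₁nn : 0 ≤ I₁ :=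
    setIntegral_nonneg measurableSet_Ioo fun u _ => le_max_right _ _
  have hI₂nn : 0 ≤ I₂ :=
    setIntegral_nonneg measurableSet_Ioo fun u _ => le_max_right _ _
  refine ⟨by rw [hgap]; linarith, ?_⟩
  -- upper bound
  have hFa : cdf μ a = p := cdf_qtl_eq μ hp hcont
  have hRHS : (a - q) * (cdfOf ν a - cdfOf μ a) = (a - q) * (cdf ν a - p) := by
    rw [cdfOf_eq μ, cdfOf_eq ν, hFa]
  rw [hgap, hRHS]
  rcases le_or_gt p (cdf ν a) with hcase | hcase
  · -- q ≤ a
    have hqa : q ≤ a := (qtl_le_iff ν hp).mpr hcase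
    have hI₁0 : I₁ = 0 := by
      have : ∀ u ∈ Ioo (0:ℝ) p, max (g u - a) 0 = (0:ℝ) := by
        intro u hu
        have h3 : g u ≤ q := qtl_mono ν ⟨hu.1, lt_trans hu.2 hp.2⟩ hp hu.2.le
        rw [max_eq_right (by linarith)]
      rw [hI₁, setIntegral_congr_fun measurableSet_Ioo this, integral_zero]
    have hbound : ∀ u ∈ Ioo p 1,
        max (a - g u) 0 ≤ (Ioc p (cdf ν a)).indicator (fun _ => a - q) u := by
      intro u hu
      have hind : ∀ v, (0:ℝ) ≤ (Ioc p (cdf ν a)).indicator (fun _ => a - q) v :=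
        fun v => indicator_nonneg (fun _ _ => by linarith) v
      rcases le_or_gt a (g u) with hga | hga
      · rw [max_eq_right (by linarith)]; exact hind u
      · have hu01 : u ∈ Ioo (0:ℝ) 1 := ⟨lt_trans hp.1 hu.1, hu.2⟩
        have h3 : q ≤ g u := qtl_mono ν hp hu01 hu.1.le
        have h4 : u ≤ cdf ν (g u) := cdf_qtl_ge ν hu01
        have h5 : cdf ν (g u) ≤ cdf ν a := (monotone_cdf ν) hga.le
        have hmem : u ∈ Ioc p (cdf ν a) := ⟨hu.1, le_trans h4 h5⟩
        rw [max_eq_left (by linarith), indicator_of_mem hmem]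
        linarith
    have hI₂le : I₂ ≤ (a - q) * (cdf ν a - p) := by
      calc I₂ ≤ ∫ u in Ioo p 1, (Ioc p (cdf ν a)).indicator (fun _ => a - q) u :=
            setIntegral_mono_on (intOn_negpart ν hp a) (intOn_indicator _ _ _)
              measurableSet_Ioo hbound
        _ ≤ (a - q) * (cdf ν a - p) :=
            integral_indicator_le _ _ _ _ (by linarith) hcase
    linarith
  · -- a < q
    have hqa : ¬ q ≤ a := fun h => absurd ((qtl_le_iff ν hp).mp h) (not_le.mpr hcase)
    push_neg at hqa
    have hI₂0 : I₂ = 0 := by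
      have : ∀ u ∈ Ioo p 1, max (a - g u) 0 = (0:ℝ) := by
        intro u hu
        have h3 : q ≤ g u := qtl_mono ν hp ⟨lt_trans hp.1 hu.1, hu.2⟩ hu.1.le
        rw [max_eq_right (by linarith)]
      rw [hI₂, setIntegral_congr_fun measurableSet_Ioo this, integral_zero]
    have hbound : ∀ u ∈ Ioo (0:ℝ) p,
        max (g u - a) 0 ≤ (Ioc (cdf ν a) p).indicator (fun _ => q - a) u := by
      intro u hu
      have hind : ∀ v, (0:ℝ) ≤ (Ioc (cdf ν a) p).indicator (fun _ => q - a) v :=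
        fun v => indicator_nonneg (fun _ _ => by linarith) v
      rcases le_or_gt (g u) a with hga | hga
      · rw [max_eq_right (by linarith)]; exact hind u
      · have hu01 : u ∈ Ioo (0:ℝ) 1 := ⟨hu.1, lt_trans hu.2 hp.2⟩
        have h3 : g u ≤ q := qtl_mono ν hu01 hp hu.2.le
        have h4 : cdf ν a < u := by
          by_contra hle
          push_neg at hle
          exact absurd ((qtl_le_iff ν hu01).mpr hle) (not_le.mpr hga)
        have hmem : u ∈ Ioc (cdf ν a) p := ⟨h4, hu.2.le⟩
        rw [max_eq_left (by linarith), indicator_of_mem hmem]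
        linarith
    have hI₁le : I₁ ≤ (q - a) * (p - cdf ν a) := by
      calc I₁ ≤ ∫ u in Ioo (0:ℝ) p, (Ioc (cdf ν a) p).indicator (fun _ => q - a) u :=
            setIntegral_mono_on (intOn_max_qtl ν hν hp a h1) (intOn_indicator _ _ _)
              measurableSet_Ioo hbound
        _ ≤ (q - a) * (p - cdf ν a) :=
            integral_indicator_le _ _ _ _ (by linarith) hcase.le
    nlinarith
end Main
end Tonelli
end

section
/- (Rockafellar–Uryasev representation of Expected Shortfall.) Let p ∈ (0,1) and F ∈ F_1^+, and for z ∈ ℝ set m_F(z) = (1 − p) z + ∫_z^∞ (1 − F(x)) dx = (1 − p) z + E((X − z)_+) for X ~ F. Then ∫_p^1 F^{-1}(u) du = min_{y ∈ ℝ} m_F(y), and the quantile y = F^{-1}(p) attains this minimum. -/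
open MeasureTheory ProbabilityTheory Filter Set

/-- The Rockafellar–Uryasev objective `m_F(z) = (1 − p) z + ∫_z^∞ (1 − F(x)) dx`. -/
noncomputable def ruObj (p : ℝ) (μ : Measure ℝ) (z : ℝ) : ℝ :=
  (1 - p) * z + ∫ x in Ioi z, (1 - cdfOf μ x)

open scoped ENNReal

/-! Write `F` for the cdf, `Q = F⁻¹` and `q = Q p`. Since `Q u ≤ s ↔ u ≤ F s` for `u ∈ (0,1)`
(right-continuity of `F`), `Q` pushes Lebesgue measure on `(0,1)` forward to `μ`. As `Q ≥ q`
on `(p,1)` and `Q ≤ q` on `(0,p]`, this gives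
`∫_p^1 Q = (1 - p) q + ∫_0^1 (Q - q)₊ = (1 - p) q + E (X - q)₊`, and the layer-cake formula
turns `E (X - q)₊` into `∫_q^∞ (1 - F)`. For the minimality, `m_F(y) - m_F(q) = ∫_q^y (F - p)`,
and `F - p ≥ 0` exactly on `[q, ∞)`. -/

lemma StieltjesFunction.qtl_le_iff (F : StieltjesFunction ℝ) {u s : ℝ}
    (hne : {x | u ≤ F x}.Nonempty) (hbdd : BddBelow {x | u ≤ F x}) :
    qtl F u ≤ s ↔ u ≤ F s := by
  refine ⟨fun h => le_trans ?_ (F.mono h), fun h => csInf_le hbdd h⟩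
  have hright : ∀ x ∈ Ioi (qtl F u), u ≤ F x := fun x hx => by
    obtain ⟨y, hy, hyx⟩ := exists_lt_of_csInf_lt hne hx
    exact hy.trans (F.mono hyx.le)
  exact ge_of_tendsto ((F.right_continuous _).mono Ioi_subset_Ici_self)
    (eventually_nhdsWithin_of_forall hright)

section Quantile

variable (μ : Measure ℝ) [IsProbabilityMeasure μ]

lemma cdfOf_eq_cdf : cdfOf μ = cdf μ := funext fun x => (cdf_eq_real μ x).symm

lemma monotone_cdfOf : Monotone (cdfOf μ) := cdfOf_eq_cdf μ ▸ monotone_cdf μ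

lemma cdfOf_le_one (x : ℝ) : cdfOf μ x ≤ 1 := cdfOf_eq_cdf μ ▸ cdf_le_one μ x

variable {μ} in
lemma qtl_cdfOf_le_iff {u : ℝ} (hu : u ∈ Ioo 0 1) (s : ℝ) :
    qtl (cdfOf μ) u ≤ s ↔ u ≤ cdfOf μ s := by
  rw [cdfOf_eq_cdf]
  refine (cdf μ).qtl_le_iff ((tendsto_cdf_atTop μ).eventually_const_le hu.2).exists ?_
  obtain ⟨x₀, hx₀⟩ := ((tendsto_cdf_atBot μ).eventually_lt_const hu.1).exists
  exact ⟨x₀, fun x hx => le_of_not_gt fun hxx₀ => (hx.trans (monotone_cdf μ hxx₀.le)).not_gt hx₀⟩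

lemma monotoneOn_qtl_cdfOf : MonotoneOn (qtl (cdfOf μ)) (Ioo 0 1) := fun _ hu _ hv huv =>
  (qtl_cdfOf_le_iff hu _).2 (huv.trans ((qtl_cdfOf_le_iff hv _).1 le_rfl))

lemma aemeasurable_qtl_cdfOf : AEMeasurable (qtl (cdfOf μ)) (volume.restrict (Ioo 0 1)) :=
  aemeasurable_restrict_of_monotoneOn measurableSet_Ioo (monotoneOn_qtl_cdfOf μ)

lemma map_qtl_cdfOf_volume : (volume.restrict (Ioo 0 1)).map (qtl (cdfOf μ)) = μ := by
  refine (Measure.ext_of_Iic μ _ fun s => ?_).symm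
  rw [Measure.map_apply_of_aemeasurable (aemeasurable_qtl_cdfOf μ) measurableSet_Iic,
    Measure.restrict_apply' measurableSet_Ioo]
  have hpre : qtl (cdfOf μ) ⁻¹' Iic s ∩ Ioo 0 1 = Iic (cdfOf μ s) ∩ Ioo 0 1 := by
    ext u
    simp only [mem_inter_iff, mem_preimage, mem_Iic]
    exact and_congr_left (qtl_cdfOf_le_iff · s)
  rw [hpre, measure_congr ((ae_eq_refl _).inter Ioo_ae_eq_Ioc),
    Iic_inter_Ioc_of_le (cdfOf_le_one μ s), Real.volume_Ioc, sub_zero, ← ofReal_cdf,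
    cdfOf_eq_cdf]

end Quantile

lemma setLIntegral_Ioi_comp_const_add (g : ℝ → ℝ≥0∞) (z : ℝ) :
    ∫⁻ t in Ioi 0, g (z + t) = ∫⁻ x in Ioi z, g x := by
  have hpre : (z + ·) ⁻¹' Ioi z = Ioi 0 := by ext t; simp
  rw [← hpre]
  exact (measurePreserving_add_left volume z).setLIntegral_comp_preimage_emb
    (measurableEmbedding_addLeft z) g (Ioi z)

lemma integrable_max_sub_const {μ : Measure ℝ} [IsFiniteMeasure μ]
    (hμ : Integrable (fun x => max x 0) μ) (z : ℝ) :
    Integrable (fun x => max (x - z) 0) μ := by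
  refine (hμ.add (integrable_const |z|)).mono' (by fun_prop) (Eventually.of_forall fun x => ?_)
  rw [Real.norm_of_nonneg (le_max_right _ _), Pi.add_apply]
  exact max_le (by linarith [le_max_left x 0, neg_abs_le z]) (by positivity)

section Tail

variable (μ : Measure ℝ) [IsProbabilityMeasure μ]

lemma ofReal_one_sub_cdfOf (x : ℝ) : ENNReal.ofReal (1 - cdfOf μ x) = μ (Ioi x) := by
  rw [← compl_Iic, prob_compl_eq_one_sub measurableSet_Iic, cdfOf,
    ENNReal.ofReal_sub _ ENNReal.toReal_nonneg, ENNReal.ofReal_one,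
    ENNReal.ofReal_toReal (measure_ne_top μ _)]

lemma lintegral_max_sub_eq_setLIntegral_Ioi (z : ℝ) :
    ∫⁻ x, ENNReal.ofReal (max (x - z) 0) ∂μ = ∫⁻ x in Ioi z, ENNReal.ofReal (1 - cdfOf μ x) := by
  have hlevel : ∀ t ∈ Ioi (0 : ℝ), μ {x | t < max (x - z) 0} = μ (Ioi (z + t)) :=
    fun t (ht : 0 < t) => by
      congr 1
      ext x
      simp only [mem_ofPred_eq, mem_Ioi, lt_max_iff, or_iff_left ht.not_gt]
      constructor <;> intro h <;> linarith
  rw [lintegral_eq_lintegral_meas_lt μ (f := fun x => max (x - z) 0)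
      (Eventually.of_forall fun x => le_max_right _ _) (by fun_prop),
    setLIntegral_congr_fun measurableSet_Ioi hlevel,
    setLIntegral_Ioi_comp_const_add (fun x => μ (Ioi x))]
  simp_rw [ofReal_one_sub_cdfOf]

lemma integral_max_sub_eq_setIntegral_Ioi (z : ℝ) :
    ∫ x, max (x - z) 0 ∂μ = ∫ x in Ioi z, (1 - cdfOf μ x) := by
  rw [integral_eq_lintegral_of_nonneg_ae (f := fun x => max (x - z) 0)
      (Eventually.of_forall fun x => le_max_right _ _) (by fun_prop),
    integral_eq_lintegral_of_nonneg_ae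
      (Eventually.of_forall fun x => sub_nonneg.2 (cdfOf_le_one μ x))
      (measurable_const.sub (monotone_cdfOf μ).measurable).aestronglyMeasurable,
    lintegral_max_sub_eq_setLIntegral_Ioi]

lemma integrableOn_one_sub_cdfOf (hμ : Integrable (fun x => max x 0) μ) (z : ℝ) :
    IntegrableOn (fun x => 1 - cdfOf μ x) (Ioi z) := by
  refine ⟨(measurable_const.sub (monotone_cdfOf μ).measurable).aestronglyMeasurable, ?_⟩
  rw [hasFiniteIntegral_iff_ofReal
      (Eventually.of_forall fun x => sub_nonneg.2 (cdfOf_le_one μ x)),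
    ← lintegral_max_sub_eq_setLIntegral_Ioi]
  exact (integrable_max_sub_const hμ z).lintegral_lt_top

end Tail

section RockafellarUryasev

variable {μ : Measure ℝ} [IsProbabilityMeasure μ]

lemma ruObj_sub_ruObj (hμ : Integrable (fun x => max x 0) μ) (p y z : ℝ) :
    ruObj p μ y - ruObj p μ z = ∫ x in z..y, (cdfOf μ x - p) := by
  have hcongr : ∫ x in z..y, (cdfOf μ x - p) = ∫ x in z..y, ((1 - p) - (1 - cdfOf μ x)) := by
    congr 1; funext x; ring
  rw [hcongr, intervalIntegral.integral_sub intervalIntegrable_const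
      (intervalIntegrable_const.sub (monotone_cdfOf μ).intervalIntegrable),
    intervalIntegral.integral_const, smul_eq_mul,
    ← intervalIntegral.integral_Ioi_sub_Ioi' (integrableOn_one_sub_cdfOf μ hμ z)
      (integrableOn_one_sub_cdfOf μ hμ y), ruObj, ruObj]
  ring

lemma ruObj_qtl_le (hμ : Integrable (fun x => max x 0) μ) {p : ℝ} (hp : p ∈ Ioo 0 1)
    (y : ℝ) :
    ruObj p μ (qtl (cdfOf μ) p) ≤ ruObj p μ y := by
  set q := qtl (cdfOf μ) p
  have hint : IntervalIntegrable (fun x => cdfOf μ x - p) volume y q :=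
    (monotone_cdfOf μ).intervalIntegrable.sub intervalIntegrable_const
  rw [← sub_nonneg, ruObj_sub_ruObj hμ]
  rcases le_total q y with hqy | hyq
  · refine intervalIntegral.integral_nonneg hqy fun x hx => ?_
    exact sub_nonneg.2 ((qtl_cdfOf_le_iff hp x).1 hx.1)
  · rw [intervalIntegral.integral_symm, neg_nonneg]
    refine (intervalIntegral.integral_mono_on_of_le_Ioo hyq hint intervalIntegrable_const
      fun x hx => ?_).trans_eq intervalIntegral.integral_zero
    exact sub_nonpos.2 (not_le.1 (mt (qtl_cdfOf_le_iff hp x).2 hx.2.not_ge)).le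

lemma setIntegral_qtl_cdfOf_Ioo (hμ : Integrable (fun x => max x 0) μ) {p : ℝ}
    (hp : p ∈ Ioo 0 1) :
    ∫ u in Ioo p 1, qtl (cdfOf μ) u
      = (1 - p) * qtl (cdfOf μ) p + ∫ x, max (x - qtl (cdfOf μ) p) 0 ∂μ := by
  set Q := qtl (cdfOf μ)
  have hQ := monotoneOn_qtl_cdfOf μ
  have hsub : Ioo p 1 ⊆ Ioo 0 1 := Ioo_subset_Ioo_left hp.1.le
  have hmap : ∫ u in Ioo 0 1, max (Q u - Q p) 0 = ∫ x, max (x - Q p) 0 ∂μ := by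
    rw [← integral_map (f := fun x => max (x - Q p) 0) (aemeasurable_qtl_cdfOf μ) (by fun_prop),
      map_qtl_cdfOf_volume]
  have hint : IntegrableOn (fun u => max (Q u - Q p) 0) (Ioo 0 1) := by
    have := integrable_max_sub_const hμ (Q p)
    rw [← map_qtl_cdfOf_volume μ] at this
    exact (integrable_map_measure (by fun_prop) (aemeasurable_qtl_cdfOf μ)).1 this
  have hlow : ∫ u in Ioo 0 1, max (Q u - Q p) 0 = ∫ u in Ioo p 1, max (Q u - Q p) 0 :=
    setIntegral_eq_of_subset_of_forall_sdiff_eq_zero measurableSet_Ioo hsub fun u hu => by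
      have hup : u ≤ p := not_lt.1 fun h => hu.2 ⟨h, hu.1.2⟩
      exact max_eq_right (sub_nonpos.2 (hQ hu.1 hp hup))
  have hhigh : ∀ u ∈ Ioo p 1, Q u = max (Q u - Q p) 0 + Q p := fun u hu => by
    rw [max_eq_left (sub_nonneg.2 (hQ hp (hsub hu) hu.1.le))]
    ring
  rw [setIntegral_congr_fun measurableSet_Ioo hhigh, integral_add (hint.mono_set hsub)
      (integrableOn_const measure_Ioo_lt_top.ne), ← hlow, hmap, setIntegral_const,
    Real.volume_real_Ioo_of_le hp.2.le, smul_eq_mul]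
  ring

end RockafellarUryasev

/-- Rockafellar–Uryasev representation of Expected Shortfall:
for `p ∈ (0,1)` and `F ∈ F₁⁺`, with `m_F(z) = (1 − p) z + ∫_z^∞ (1 − F(x)) dx`,
one has `∫_p^1 F⁻¹(u) du = min_{y ∈ ℝ} m_F(y)`, the minimum being attained at
`y = F⁻¹(p)`. -/
theorem stmt9 (μ : Measure ℝ) [IsProbabilityMeasure μ]
    (hμ : Integrable (fun x => max x 0) μ)
    (p : ℝ) (hp : p ∈ Ioo (0 : ℝ) 1) :
    (∫ u in p..1, qtl (cdfOf μ) u) = ruObj p μ (qtl (cdfOf μ) p) ∧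
      ∀ y : ℝ, ruObj p μ (qtl (cdfOf μ) p) ≤ ruObj p μ y := by
  refine ⟨?_, ruObj_qtl_le hμ hp⟩
  rw [intervalIntegral.integral_of_le hp.2.le, ← Measure.restrict_congr_set Ioo_ae_eq_Ioc,
    setIntegral_qtl_cdfOf_Ioo hμ hp, integral_max_sub_eq_setIntegral_Ioi, ruObj]
end
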